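/- For every positive integer i, with b(i,2,k) as defined from sums over compositions, one has b(i,2,i+2) = 1, ∑_{k=1}^{i+2} b(i,2,k)/k! = 1/2, and ∑_{k=1}^{i+2} (b(i,2,k)/k!)·2^k = (i+4)/2. -/

import Mathlib

/-!
Put `H t n = ∑ₖ S(k,n) tᵏ / k!`, the coefficient of `xⁿ` in `exp (t ∑_{j≥1} xʲ/j) = (1 - x)^(-t)`.
Without generating functions: in `n / (l₀⋯l_k) = ∑ₛ lₛ / (l₀⋯l_k)` every slot `s` contributes
the same as slot `0`, whose weight cancels, so `n S(k+1,n) = (k+1) ∑_{m<n} S(k,m)`. Summed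
against `tᵏ⁺¹/(k+1)!` this is `(n+1) H t (n+1) = t ∑_{m≤n} H t m`, and differencing gives
`(n+1) H t (n+1) = (t+n) H t n`, i.e. `n! H t n = t(t+1)⋯(t+n-1)`. Hence `H 1 n = 1` and
`H 2 n = n + 1`, and the sums in question are `H t (i+2) - H t (i+1) / 2` at `t = 1, 2`.
-/

open Finset Polynomial

/-- The set of `k`-tuples of positive integers summing to `n`. -/
def P (k n : ℕ) : Finset (Fin k → ℕ) :=
  (Finset.Nat.antidiagonalTuple k n).filter fun l => ∀ i, 0 < l i

/-- `∑_{(l₁,…,l_k)∈P(k,n)} 1/(l₁⋯l_k)`. -/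
def S (k n : ℕ) : ℚ := ∑ l ∈ P k n, (∏ i, (l i : ℚ))⁻¹

/-- `e_l(1,2,…,m)` : the l-th elementary symmetric polynomial evaluated at 1,…,m. -/
def esym (m l : ℕ) : ℚ := (((Finset.range m).val.map fun i => ((i : ℚ) + 1)).esymm l)

lemma mem_P {k n : ℕ} {l : Fin k → ℕ} : l ∈ P k n ↔ (∑ i, l i = n) ∧ ∀ i, 0 < l i := by
  simp [P, Finset.Nat.mem_antidiagonalTuple]

lemma P_eq_empty_of_lt {k n : ℕ} (h : n < k) : P k n = ∅ := by
  refine Finset.eq_empty_of_forall_notMem fun l hl => ?_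
  obtain ⟨hsum, hpos⟩ := mem_P.1 hl
  have : k ≤ n := calc
    k = ∑ _i : Fin k, 1 := by simp
    _ ≤ ∑ i, l i := Finset.sum_le_sum fun i _ => hpos i
    _ = n := hsum
  omega

lemma S_eq_zero_of_lt {k n : ℕ} (h : n < k) : S k n = 0 := by
  simp [S, P_eq_empty_of_lt h]

lemma S_zero_succ (n : ℕ) : S 0 (n + 1) = 0 := by
  have : P 0 (n + 1) = ∅ := Finset.eq_empty_of_forall_notMem fun l hl => by simpa using mem_P.1 hl
  simp [S, this]

lemma P_self (n : ℕ) : P n n = {fun _ => 1} := by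
  ext l
  rw [mem_P, Finset.mem_singleton]
  refine ⟨fun ⟨hsum, hpos⟩ => funext fun i => ?_, by rintro rfl; simp⟩
  by_contra hne
  have : ∑ _j : Fin n, 1 < ∑ j, l j :=
    Finset.sum_lt_sum (fun j _ => hpos j) ⟨i, Finset.mem_univ i, by have := hpos i; omega⟩
  simp [hsum] at this

lemma S_self (n : ℕ) : S n n = 1 := by
  simp [S, P_self]

lemma sum_P_succ {k n : ℕ} (F : (Fin (k + 1) → ℕ) → ℚ) :
    ∑ l ∈ P (k + 1) n, F l = ∑ j ∈ Finset.Icc 1 n, ∑ m ∈ P k (n - j), F (Fin.cons j m) := by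
  rw [Finset.sum_sigma']
  refine Finset.sum_nbij' (fun l => ⟨l 0, Fin.tail l⟩) (fun x => Fin.cons x.1 x.2)
    (fun l hl => ?_) (fun x hx => ?_) (fun l _ => Fin.cons_self_tail l)
    (fun x _ => by ext <;> simp) (fun l _ => by rw [Fin.cons_self_tail])
  · obtain ⟨hsum, hpos⟩ := mem_P.1 hl
    rw [Fin.sum_univ_succ] at hsum
    simp only [Finset.mem_sigma, Finset.mem_Icc, mem_P, Fin.tail]
    exact ⟨⟨hpos 0, by omega⟩, by omega, fun i => hpos i.succ⟩
  · simp only [Finset.mem_sigma, Finset.mem_Icc, mem_P] at hx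
    obtain ⟨⟨hj1, hjn⟩, hsum, hpos⟩ := hx
    refine mem_P.2 ⟨?_, Fin.cases hj1 fun i => by simpa using hpos i⟩
    simp only [Fin.sum_univ_succ, Fin.cons_zero, Fin.cons_succ]
    omega

lemma sum_P_comp_perm {k n : ℕ} (σ : Equiv.Perm (Fin k)) (F : (Fin k → ℕ) → ℚ) :
    ∑ l ∈ P k n, F (l ∘ σ) = ∑ l ∈ P k n, F l := by
  have hmem : ∀ τ : Equiv.Perm (Fin k), ∀ l ∈ P k n, l ∘ τ ∈ P k n := fun τ l hl => by
    obtain ⟨hsum, hpos⟩ := mem_P.1 hl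
    exact mem_P.2 ⟨(Equiv.sum_comp τ l).trans hsum, fun i => hpos _⟩
  exact Finset.sum_nbij' (· ∘ σ) (· ∘ σ.symm) (hmem σ) (hmem σ.symm)
    (fun l _ => by ext; simp) (fun l _ => by ext; simp) (fun _ _ => rfl)

lemma sum_P_succ_head_mul_inv_prod (k n : ℕ) :
    ∑ l ∈ P (k + 1) n, (l 0 : ℚ) * (∏ i, (l i : ℚ))⁻¹ = ∑ m ∈ Finset.range n, S k m := by
  rw [sum_P_succ]
  refine Finset.sum_nbij' (n - ·) (n - ·) ?_ ?_ ?_ ?_ fun j hj => Finset.sum_congr rfl fun m _ => ?_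
  iterate 4 (intro a ha; simp only [Finset.mem_Icc, Finset.mem_range] at ha ⊢; omega)
  have hj0 : (j : ℚ) ≠ 0 := Nat.cast_ne_zero.2 (by simp at hj; omega)
  simp only [Fin.prod_univ_succ, Fin.cons_zero, Fin.cons_succ, mul_inv, ← mul_assoc,
    mul_inv_cancel₀ hj0, one_mul]

lemma natCast_mul_S_succ (k n : ℕ) :
    (n : ℚ) * S (k + 1) n = (k + 1) * ∑ m ∈ Finset.range n, S k m := by
  have hslot : ∀ s : Fin (k + 1), ∑ l ∈ P (k + 1) n, (l s : ℚ) * (∏ i, (l i : ℚ))⁻¹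
      = ∑ l ∈ P (k + 1) n, (l 0 : ℚ) * (∏ i, (l i : ℚ))⁻¹ := fun s => by
    rw [← sum_P_comp_perm (Equiv.swap 0 s)]
    refine Finset.sum_congr rfl fun l _ => ?_
    simp only [Function.comp, Equiv.swap_apply_right,
      Equiv.prod_comp (Equiv.swap 0 s) (fun i => (l i : ℚ))]
  calc (n : ℚ) * S (k + 1) n
      = ∑ l ∈ P (k + 1) n, ∑ s, (l s : ℚ) * (∏ i, (l i : ℚ))⁻¹ := by
        rw [S, Finset.mul_sum]
        refine Finset.sum_congr rfl fun l hl => ?_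
        rw [← Finset.sum_mul, ← Nat.cast_sum, (mem_P.1 hl).1]
    _ = (k + 1) * ∑ m ∈ Finset.range n, S k m := by
        rw [Finset.sum_comm, Finset.sum_congr rfl fun s _ => hslot s,
          sum_P_succ_head_mul_inv_prod]
        simp

def H (t : ℚ) (n : ℕ) : ℚ := ∑ k ∈ Finset.range (n + 1), S k n / k.factorial * t ^ k

lemma sum_range_eq_H (t : ℚ) {n N : ℕ} (h : n ≤ N) :
    ∑ k ∈ Finset.range (N + 1), S k n / k.factorial * t ^ k = H t n := by
  refine (Finset.sum_subset (Finset.range_subset_range.2 (by omega)) fun k hk hk' => ?_).symm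
  simp only [Finset.mem_range] at hk hk'
  simp [S_eq_zero_of_lt (show n < k by omega)]

lemma sum_Icc_eq_H (t : ℚ) {n N : ℕ} (h : n + 1 ≤ N) :
    ∑ k ∈ Finset.Icc 1 N, S k (n + 1) / k.factorial * t ^ k = H t (n + 1) := by
  rw [← sum_range_eq_H t h, Finset.range_eq_Ico, Finset.sum_eq_sum_Ico_succ_bot (by omega),
    S_zero_succ, zero_div, zero_mul, zero_add]
  rfl

lemma succ_mul_H_succ (t : ℚ) (n : ℕ) :
    ((n : ℚ) + 1) * H t (n + 1) = t * ∑ m ∈ Finset.range (n + 1), H t m := by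
  have hterm : ∀ k, ((n : ℚ) + 1) * (S (k + 1) (n + 1) / (k + 1).factorial * t ^ (k + 1))
      = t * ∑ m ∈ Finset.range (n + 1), S k m / k.factorial * t ^ k := fun k => by
    have hS := natCast_mul_S_succ k (n + 1)
    push_cast at hS
    rw [← Finset.sum_mul, ← Finset.sum_div, Nat.factorial_succ, Nat.cast_mul,
      show ((n : ℚ) + 1) * (S (k + 1) (n + 1) / (((k + 1 : ℕ) : ℚ) * k.factorial) * t ^ (k + 1))
        = ((n + 1) * S (k + 1) (n + 1)) / (((k + 1 : ℕ) : ℚ) * k.factorial) * t ^ (k + 1) by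
        ring, hS]
    field_simp
    push_cast
    ring
  rw [H, Finset.mul_sum, Finset.sum_range_succ', S_zero_succ, zero_div, zero_mul, mul_zero,
    add_zero, Finset.sum_congr rfl fun k _ => hterm k, ← Finset.mul_sum, Finset.sum_comm]
  exact congrArg (t * ·) (Finset.sum_congr rfl fun m hm =>
    sum_range_eq_H t (Nat.lt_succ_iff.1 (Finset.mem_range.1 hm)))

lemma succ_mul_H_succ_eq (t : ℚ) (n : ℕ) :
    ((n : ℚ) + 1) * H t (n + 1) = (t + n) * H t n := by
  cases n with
  | zero => simpa [H, S_self 0] using succ_mul_H_succ t 0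
  | succ n =>
    have h := succ_mul_H_succ t (n + 1)
    rw [Finset.sum_range_succ, mul_add, ← succ_mul_H_succ t n] at h
    rw [h]
    push_cast
    ring

lemma H_mul_factorial (t : ℚ) (n : ℕ) :
    H t n * n.factorial = (ascPochhammer ℚ n).eval t := by
  induction n with
  | zero => simp [H, S_self 0]
  | succ n ih =>
    rw [ascPochhammer_succ_eval, ← ih, Nat.factorial_succ, Nat.cast_mul,
      show H t (n + 1) * (((n + 1 : ℕ) : ℚ) * n.factorial)
        = ((n + 1) * H t (n + 1)) * n.factorial by push_cast; ring,
      succ_mul_H_succ_eq]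
    ring

lemma H_one (n : ℕ) : H 1 n = 1 := by
  have h := H_mul_factorial 1 n
  rw [ascPochhammer_eval_one] at h
  exact (mul_eq_right₀ (Nat.cast_ne_zero.2 n.factorial_ne_zero)).1 h

lemma H_two (n : ℕ) : H 2 n = n + 1 := by
  have hasc : ((2 : ℕ).ascFactorial n : ℚ) = (n + 1).factorial := by
    have := Nat.factorial_mul_ascFactorial 1 n
    rw [Nat.factorial_one, one_mul, add_comm 1 n] at this
    exact_mod_cast this
  have hP := ascPochhammer_nat_eq_natCast_ascFactorial ℚ 2 n
  push_cast at hP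
  have h := H_mul_factorial 2 n
  rw [hP, hasc, Nat.factorial_succ, Nat.cast_mul] at h
  push_cast at h
  exact mul_right_cancel₀ (Nat.cast_ne_zero.2 n.factorial_ne_zero) h

lemma sum_Icc_sub_div_factorial_mul_pow (t : ℚ) (n : ℕ) :
    ∑ k ∈ Finset.Icc 1 (n + 2), (S k (n + 2) - S k (n + 1) / 2) / k.factorial * t ^ k
      = H t (n + 2) - H t (n + 1) / 2 := by
  simp only [sub_div, sub_mul, Finset.sum_sub_distrib, div_right_comm _ (2 : ℚ),
    div_mul_eq_mul_div _ (2 : ℚ)]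
  rw [sum_Icc_eq_H t le_rfl, ← Finset.sum_div, sum_Icc_eq_H t (by omega)]

theorem stmt7_general (i : ℕ) :
    S (i + 2) (i + 2) - S (i + 2) (i + 1) / 2 = 1 ∧
    ∑ k ∈ Finset.Icc 1 (i + 2), (S k (i + 2) - S k (i + 1) / 2) / k.factorial = 1 / 2 ∧
    ∑ k ∈ Finset.Icc 1 (i + 2), (S k (i + 2) - S k (i + 1) / 2) / k.factorial * 2 ^ k
      = ((i : ℚ) + 4) / 2 := by
  refine ⟨?_, ?_, ?_⟩
  · rw [S_self, S_eq_zero_of_lt (by omega)]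
    norm_num
  · have h := sum_Icc_sub_div_factorial_mul_pow 1 i
    simp only [one_pow, mul_one, H_one] at h
    rw [h]
    norm_num
  · rw [sum_Icc_sub_div_factorial_mul_pow, H_two, H_two]
    push_cast
    ring

theorem stmt7 (i : ℕ) (hi : 0 < i) :
    S (i + 2) (i + 2) - S (i + 2) (i + 1) / 2 = 1 ∧
    ∑ k ∈ Finset.Icc 1 (i + 2), (S k (i + 2) - S k (i + 1) / 2) / k.factorial = 1 / 2 ∧
    ∑ k ∈ Finset.Icc 1 (i + 2), (S k (i + 2) - S k (i + 1) / 2) / k.factorial * 2 ^ k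
      = ((i : ℚ) + 4) / 2 :=
  stmt7_general i
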